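/- Let (λₖ²)ₖ≥₁ and (μₖ²)ₖ≥₁ satisfy λ₁² > μ₁² > λ₂² > μ₂² > … > 0 with λₖ² → 0, set σ = {λₖ² : k ≥ 1} ∪ {0}, and let Φ(z) = ∏ₖ≥₁ (z − μₖ²)/(z − λₖ²). Define aₙ = (λₙ² − μₙ²) · ∏_{k≠n} (λₙ² − μₖ²)/(λₙ² − λₖ²) for each n ≥ 1. Then aₙ > 0, ∑ₙ≥₁ aₙ/λₙ² ≤ 1, the series ∑ₙ≥₁ aₙ/(λₙ² − z) converges uniformly on compact subsets of ℂ∖σ, and Φ(z) = 1 − ∑ₙ≥₁ aₙ/(λₙ² − z) for all z ∈ ℂ∖σ. -/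

import Mathlib

/-!
For finite `N` the rational function `∏_{k<N} (z - μₖ)/(z - λₖ)` has the partial fraction
expansion `1 - ∑_{n<N} c_{N,n}/(λₙ - z)`, whose coefficient `c_{N,n}` is exactly the `N`-th
partial product defining `aₙ`. Interlacing makes every factor of `c_{N,n}` positive, with the
factors for `k > n` at least `1` and those for `k < n` at most `1`; so `c_{N,n}` increases to
`aₙ > 0` for `N ≥ n` and is at most `λₙ - μₙ` for `N ≤ n`. At `z = 0` the expansion gives
`∑_{n<N} c_{N,n}/λₙ ≤ 1`, hence `∑ aₙ/λₙ ≤ 1` and `∑ aₙ < ∞`. Since also `∑ (λₙ - μₙ) < ∞` and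
`σ` is compact, dominated convergence passes the expansion to the limit `N → ∞`, and the
Weierstrass M-test gives the uniform convergence.
-/
open Filter Topology

/-- The set `σ = {λₖ² : k ≥ 1} ∪ {0}`, as a subset of `ℂ`. -/
def sigmaSet (lam : ℕ → ℝ) : Set ℂ :=
  insert (0 : ℂ) (Set.range fun k : ℕ => ((lam k : ℝ) : ℂ))

open Finset

section PartialFractions

variable {F : Type*} [Field F]

/-- The coefficient of `1/(L n - z)` in the partial fraction expansion of
`∏_{k<N} (z - M k)/(z - L k)`; the paper's `aₙ` is its limit as `N → ∞`. -/
noncomputable def partialFractionCoeff (L M : ℕ → F) (N n : ℕ) : F :=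
  (L n - M n) * ∏ k ∈ (range N).erase n, (L n - M k) / (L n - L k)

lemma partialFractionCoeff_succ_self (L M : ℕ → F) (N : ℕ) :
    partialFractionCoeff L M (N + 1) N =
      (L N - M N) * ∏ k ∈ range N, (L N - M k) / (L N - L k) := by
  rw [partialFractionCoeff, range_add_one, erase_insert notMem_range_self]

lemma partialFractionCoeff_succ_of_lt (L M : ℕ → F) {N n : ℕ} (h : n < N) :
    partialFractionCoeff L M (N + 1) n =
      (L n - M N) / (L n - L N) * partialFractionCoeff L M N n := by
  rw [partialFractionCoeff, partialFractionCoeff, range_add_one, erase_insert_of_ne h.ne',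
    prod_insert (by simp)]
  ring

lemma map_partialFractionCoeff {K : Type*} [Field K] (f : F →+* K) (L M : ℕ → F) (N n : ℕ) :
    f (partialFractionCoeff L M N n) =
      partialFractionCoeff (fun k => f (L k)) (fun k => f (M k)) N n := by
  simp [partialFractionCoeff, map_prod, map_div₀]

/-- Induction on `N`: multiplying by the new factor `(z - M N)/(z - L N)` splits each old term
`c/((L n - z)(z - L N))` into simple fractions, and the residue at `L N` that appears is the value
of the old identity at `z = L N`. -/
theorem prod_range_div_sub_eq_one_sub_sum {L : ℕ → F} (M : ℕ → F) (hL : Function.Injective L)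
    (N : ℕ) {z : F} (hz : ∀ k < N, z ≠ L k) :
    ∏ k ∈ range N, (z - M k) / (z - L k) =
      1 - ∑ n ∈ range N, partialFractionCoeff L M N n / (L n - z) := by
  induction N generalizing z with
  | zero => simp
  | succ N ih =>
    have hzN : L N - z ≠ 0 := sub_ne_zero.2 (hz N N.lt_succ_self).symm
    have hNz : z - L N ≠ 0 := sub_ne_zero.2 (hz N N.lt_succ_self)
    have split : ∀ n ∈ range N, partialFractionCoeff L M (N + 1) n / (L n - z) =
        partialFractionCoeff L M N n / (L n - z) * ((z - M N) / (z - L N)) +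
          partialFractionCoeff L M N n / (L n - L N) * ((L N - M N) / (L N - z)) := by
      intro n hn
      have hnN := mem_range.1 hn
      have : L n - z ≠ 0 := sub_ne_zero.2 (hz n (Nat.lt_succ_of_lt hnN)).symm
      have : L n - L N ≠ 0 := sub_ne_zero.2 (hL.ne hnN.ne)
      rw [partialFractionCoeff_succ_of_lt L M hnN]
      field_simp
      ring
    have hq : (z - M N) / (z - L N) = 1 - (L N - M N) / (L N - z) := by
      field_simp
      ring
    rw [prod_range_succ, ih fun k hk => hz k (Nat.lt_succ_of_lt hk), sum_range_succ,
      sum_congr rfl split, sum_add_distrib, ← sum_mul, ← sum_mul, partialFractionCoeff_succ_self,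
      ih fun k hk => hL.ne hk.ne', hq]
    ring

end PartialFractions

structure Interlacing (lam mu : ℕ → ℝ) : Prop where
  mu_lt_lam : ∀ k, mu k < lam k
  lam_succ_lt_mu : ∀ k, lam (k + 1) < mu k

namespace Interlacing

variable {lam mu : ℕ → ℝ}

lemma strictAnti (hI : Interlacing lam mu) : StrictAnti lam :=
  strictAnti_nat_of_succ_lt fun k => (hI.lam_succ_lt_mu k).trans (hI.mu_lt_lam k)

lemma lam_lt_mu_of_lt (hI : Interlacing lam mu) {k n : ℕ} (h : k < n) : lam n < mu k :=
  (hI.strictAnti.antitone h).trans_lt (hI.lam_succ_lt_mu k)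

lemma div_mem_Ioc_of_lt (hI : Interlacing lam mu) {k n : ℕ} (h : k < n) :
    (lam n - mu k) / (lam n - lam k) ∈ Set.Ioc 0 1 := by
  have hden : lam n - lam k < 0 := sub_neg.2 (hI.strictAnti h)
  refine ⟨div_pos_of_neg_of_neg (sub_neg.2 (hI.lam_lt_mu_of_lt h)) hden, ?_⟩
  rw [div_le_one_of_neg hden]
  linarith [hI.mu_lt_lam k]

lemma one_le_div_of_lt (hI : Interlacing lam mu) {n k : ℕ} (h : n < k) :
    1 ≤ (lam n - mu k) / (lam n - lam k) := by
  rw [one_le_div (sub_pos.2 (hI.strictAnti h))]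
  linarith [hI.mu_lt_lam k]

lemma div_pos_of_ne (hI : Interlacing lam mu) {n k : ℕ} (h : k ≠ n) :
    0 < (lam n - mu k) / (lam n - lam k) := by
  rcases h.lt_or_gt with h | h
  · exact (hI.div_mem_Ioc_of_lt h).1
  · exact one_pos.trans_le (hI.one_le_div_of_lt h)

lemma partialFractionCoeff_pos (hI : Interlacing lam mu) (N n : ℕ) :
    0 < partialFractionCoeff lam mu N n :=
  mul_pos (sub_pos.2 (hI.mu_lt_lam n)) <| prod_pos fun _ hk => hI.div_pos_of_ne (ne_of_mem_erase hk)

lemma partialFractionCoeff_le_of_le (hI : Interlacing lam mu) {N n : ℕ} (h : N ≤ n) :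
    partialFractionCoeff lam mu N n ≤ lam n - mu n := by
  refine mul_le_of_le_one_right (sub_pos.2 (hI.mu_lt_lam n)).le <| prod_le_one
    (fun k hk => (hI.div_pos_of_ne (ne_of_mem_erase hk)).le) fun k hk => ?_
  exact (hI.div_mem_Ioc_of_lt <| (mem_range.1 (mem_of_mem_erase hk)).trans_le h).2

lemma monotoneOn_partialFractionCoeff (hI : Interlacing lam mu) (n : ℕ) :
    MonotoneOn (fun N => partialFractionCoeff lam mu N n) (Set.Ici n) := by
  refine monotoneOn_nat_Ici_of_le_succ fun N hN => ?_
  rcases hN.eq_or_lt with rfl | h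
  · rw [partialFractionCoeff_succ_self, partialFractionCoeff, erase_eq_of_notMem notMem_range_self]
  · rw [partialFractionCoeff_succ_of_lt lam mu h]
    exact le_mul_of_one_le_left (hI.partialFractionCoeff_pos N n).le (hI.one_le_div_of_lt h)

lemma summable_sub (hI : Interlacing lam mu) (hmu : ∀ k, 0 < mu k) :
    Summable fun k => lam k - mu k := by
  refine summable_of_sum_range_le (c := lam 0) (fun k => (sub_pos.2 (hI.mu_lt_lam k)).le)
    fun N => ?_
  calc ∑ k ∈ range N, (lam k - mu k)
      ≤ ∑ k ∈ range N, (lam k - lam (k + 1)) :=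
        sum_le_sum fun k _ => by linarith [hI.lam_succ_lt_mu k]
    _ = lam 0 - lam N := sum_range_sub' lam N
    _ ≤ lam 0 := by linarith [hmu N, hI.mu_lt_lam N]

/-- The partial fraction identity at `z = 0`, where the product `∏ μₖ/λₖ` is positive. -/
lemma sum_range_partialFractionCoeff_div_le_one (hI : Interlacing lam mu)
    (hmu : ∀ k, 0 < mu k) (N : ℕ) :
    ∑ n ∈ range N, partialFractionCoeff lam mu N n / lam n ≤ 1 := by
  have hlam : ∀ k, 0 < lam k := fun k => (hmu k).trans (hI.mu_lt_lam k)
  have h := prod_range_div_sub_eq_one_sub_sum mu hI.strictAnti.injective N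
    fun k _ => (hlam k).ne
  simp only [zero_sub, neg_div_neg_eq, sub_zero] at h
  linarith [prod_pos fun k (_ : k ∈ range N) => div_pos (hmu k) (hlam k)]

section Limit

variable {a : ℕ → ℝ}

lemma partialFractionCoeff_le_of_tendsto (hI : Interlacing lam mu)
    (ha : ∀ n, Tendsto (fun N => partialFractionCoeff lam mu N n) atTop (𝓝 (a n)))
    {N n : ℕ} (h : n ≤ N) : partialFractionCoeff lam mu N n ≤ a n :=
  ge_of_tendsto (ha n) <| eventually_atTop.2
    ⟨N, fun _ hM => hI.monotoneOn_partialFractionCoeff n h (h.trans hM) hM⟩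

lemma pos_of_tendsto (hI : Interlacing lam mu)
    (ha : ∀ n, Tendsto (fun N => partialFractionCoeff lam mu N n) atTop (𝓝 (a n))) (n : ℕ) :
    0 < a n :=
  (hI.partialFractionCoeff_pos n n).trans_le (hI.partialFractionCoeff_le_of_tendsto ha le_rfl)

lemma partialFractionCoeff_le_sub_add (hI : Interlacing lam mu)
    (ha : ∀ n, Tendsto (fun N => partialFractionCoeff lam mu N n) atTop (𝓝 (a n))) (N n : ℕ) :
    partialFractionCoeff lam mu N n ≤ lam n - mu n + a n := by
  have hsub := (sub_pos.2 (hI.mu_lt_lam n)).le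
  rcases le_total n N with h | h
  · linarith [hI.partialFractionCoeff_le_of_tendsto ha h]
  · linarith [hI.partialFractionCoeff_le_of_le h, hI.pos_of_tendsto ha n]

lemma sum_range_div_le_one (hI : Interlacing lam mu) (hmu : ∀ k, 0 < mu k)
    (ha : ∀ n, Tendsto (fun N => partialFractionCoeff lam mu N n) atTop (𝓝 (a n))) (N : ℕ) :
    ∑ n ∈ range N, a n / lam n ≤ 1 := by
  refine le_of_tendsto (tendsto_finsetSum _ fun n _ => (ha n).div_const (lam n))
    (eventually_atTop.2 ⟨N, fun M hM => ?_⟩)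
  calc ∑ n ∈ range N, partialFractionCoeff lam mu M n / lam n
      ≤ ∑ n ∈ range M, partialFractionCoeff lam mu M n / lam n :=
        sum_le_sum_of_subset_of_nonneg (range_subset_range.2 hM) fun n _ _ =>
          div_nonneg (hI.partialFractionCoeff_pos M n).le ((hmu n).trans (hI.mu_lt_lam n)).le
    _ ≤ 1 := hI.sum_range_partialFractionCoeff_div_le_one hmu M

lemma summable_div (hI : Interlacing lam mu) (hmu : ∀ k, 0 < mu k)
    (ha : ∀ n, Tendsto (fun N => partialFractionCoeff lam mu N n) atTop (𝓝 (a n))) :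
    Summable fun n => a n / lam n :=
  summable_of_sum_range_le
    (fun n => div_nonneg (hI.pos_of_tendsto ha n).le ((hmu n).trans (hI.mu_lt_lam n)).le)
    (hI.sum_range_div_le_one hmu ha)

lemma summable (hI : Interlacing lam mu) (hmu : ∀ k, 0 < mu k)
    (ha : ∀ n, Tendsto (fun N => partialFractionCoeff lam mu N n) atTop (𝓝 (a n))) :
    Summable a := by
  refine (hI.summable_div hmu ha).mul_left (lam 0) |>.of_nonneg_of_le
    (fun n => (hI.pos_of_tendsto ha n).le) fun n => ?_
  rw [mul_div_left_comm]
  exact le_mul_of_one_le_right (hI.pos_of_tendsto ha n).le <|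
    (one_le_div ((hmu n).trans (hI.mu_lt_lam n))).2 (hI.strictAnti.antitone n.zero_le)

end Limit

end Interlacing

lemma tendsto_sum_range_of_dominated {G : Type*} [NormedAddCommGroup G] [CompleteSpace G]
    {f : ℕ → ℕ → G} {g : ℕ → G} {bound : ℕ → ℝ} (h_sum : Summable bound)
    (hfg : ∀ n, Tendsto (f · n) atTop (𝓝 (g n))) (h_bound : ∀ N n, ‖f N n‖ ≤ bound n) :
    Tendsto (fun N => ∑ n ∈ range N, f N n) atTop (𝓝 (∑' n, g n)) := by
  have h := tendsto_tsum_of_dominated_convergence (f := fun N n => if n < N then f N n else 0)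
    h_sum (fun n => (hfg n).congr' <| (eventually_gt_atTop n).mono fun N hN => (if_pos hN).symm)
    (Eventually.of_forall fun N n => by
      split_ifs
      · exact h_bound N n
      · exact norm_zero (E := G) ▸ (norm_nonneg _).trans (h_bound N n))
  refine h.congr fun N => ?_
  rw [tsum_eq_sum (s := range N) fun n hn => if_neg (by simpa using hn)]
  exact sum_congr rfl fun n hn => if_pos (mem_range.1 hn)

lemma isCompact_sigmaSet {lam : ℕ → ℝ} (hlim : Tendsto lam atTop (𝓝 0)) :
    IsCompact (sigmaSet lam) :=
  ((Complex.continuous_ofReal.tendsto 0).comp hlim).isCompact_insert_range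

lemma exists_pos_le_norm_sub_of_subset_compl {lam : ℕ → ℝ} (hlim : Tendsto lam atTop (𝓝 0))
    {K : Set ℂ} (hK : IsCompact K) (hKσ : K ⊆ (sigmaSet lam)ᶜ) :
    ∃ δ > 0, ∀ z ∈ K, ∀ n, δ ≤ ‖(lam n : ℂ) - z‖ := by
  obtain ⟨r, hr, h⟩ := Metric.exists_pos_forall_lt_edist hK (isCompact_sigmaSet hlim).isClosed
    (Set.subset_compl_iff_disjoint_right.1 hKσ)
  refine ⟨r, hr, fun z hz n => ?_⟩
  have := h z hz _ (Set.mem_insert_of_mem _ ⟨n, rfl⟩)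
  rw [edist_nndist, ENNReal.coe_lt_coe, ← NNReal.coe_lt_coe, coe_nndist, dist_eq_norm'] at this
  exact this.le

lemma tendstoUniformlyOn_sum_div_sub {lam a : ℕ → ℝ} (hlim : Tendsto lam atTop (𝓝 0))
    (ha : Summable a) (ha₀ : ∀ n, 0 ≤ a n) {K : Set ℂ} (hK : IsCompact K)
    (hKσ : K ⊆ (sigmaSet lam)ᶜ) :
    TendstoUniformlyOn (fun N z => ∑ n ∈ range N, (a n : ℂ) / ((lam n : ℂ) - z))
      (fun z => ∑' n, (a n : ℂ) / ((lam n : ℂ) - z)) atTop K := by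
  obtain ⟨δ, hδ, hδK⟩ := exists_pos_le_norm_sub_of_subset_compl hlim hK hKσ
  refine tendstoUniformlyOn_tsum_nat (ha.div_const δ) fun n z hz => ?_
  rw [norm_div, Complex.norm_real, Real.norm_of_nonneg (ha₀ n)]
  exact div_le_div_of_nonneg_left (ha₀ n) hδ (hδK z hz n)

namespace Interlacing

variable {lam mu a : ℕ → ℝ}

theorem tendsto_prod_range_div_sub (hI : Interlacing lam mu) (hmu : ∀ k, 0 < mu k)
    (hlim : Tendsto lam atTop (𝓝 0))
    (ha : ∀ n, Tendsto (fun N => partialFractionCoeff lam mu N n) atTop (𝓝 (a n)))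
    {z : ℂ} (hz : z ∈ (sigmaSet lam)ᶜ) :
    Tendsto (fun N => ∏ k ∈ range N, (z - (mu k : ℂ)) / (z - (lam k : ℂ))) atTop
      (𝓝 (1 - ∑' n, (a n : ℂ) / ((lam n : ℂ) - z))) := by
  obtain ⟨δ, hδ, hδz⟩ :=
    exists_pos_le_norm_sub_of_subset_compl hlim isCompact_singleton (Set.singleton_subset_iff.2 hz)
  have hz_ne : ∀ k, z ≠ lam k := fun k h => hz (h ▸ Set.mem_insert_of_mem _ ⟨k, rfl⟩)
  have hfin : ∀ N, ∏ k ∈ range N, (z - (mu k : ℂ)) / (z - (lam k : ℂ)) =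
      1 - ∑ n ∈ range N, ((partialFractionCoeff lam mu N n : ℝ) : ℂ) / ((lam n : ℂ) - z) := by
    intro N
    rw [prod_range_div_sub_eq_one_sub_sum (L := fun k => (lam k : ℂ)) _
      (Complex.ofReal_injective.comp hI.strictAnti.injective) N fun k _ => hz_ne k]
    simp only [← Complex.ofRealHom_eq_coe, map_partialFractionCoeff]
  simp_rw [hfin]
  refine tendsto_const_nhds.sub <| tendsto_sum_range_of_dominated
    (((hI.summable_sub hmu).add (hI.summable hmu ha)).div_const δ)
    (fun n => ((Complex.continuous_ofReal.tendsto _).comp (ha n)).div_const _) fun N n => ?_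
  rw [norm_div, Complex.norm_real, Real.norm_of_nonneg (hI.partialFractionCoeff_pos N n).le]
  have hle := hI.partialFractionCoeff_le_sub_add ha N n
  exact div_le_div₀ ((hI.partialFractionCoeff_pos N n).le.trans hle) hle hδ (hδz z rfl n)

end Interlacing

/-- Let `(λₖ²)`, `(μₖ²)` (here `lam`, `mu`) satisfy
`λ₁² > μ₁² > λ₂² > μ₂² > … > 0` with `λₖ² → 0`, `σ = {λₖ²} ∪ {0}`, and let
`Φ(z) = ∏ₖ (z − μₖ²)/(z − λₖ²)` (pointwise limit of partial products). Let
`aₙ = (λₙ² − μₙ²)·∏_{k≠n} (λₙ² − μₖ²)/(λₙ² − λₖ²)` (characterized as the limit of the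
partial products). Then `aₙ > 0`, `∑ aₙ/λₙ²` converges with sum `≤ 1`, the series
`∑ aₙ/(λₙ² − z)` converges uniformly on compact subsets of `ℂ∖σ`, and
`Φ(z) = 1 − ∑ₙ aₙ/(λₙ² − z)` on `ℂ∖σ`. -/
theorem statement_17
    (lam mu : ℕ → ℝ)
    (hmu_pos : ∀ k, 0 < mu k)
    (h1 : ∀ k, mu k < lam k)
    (h2 : ∀ k, lam (k + 1) < mu k)
    (hlim : Tendsto lam atTop (nhds 0))
    (Φ : ℂ → ℂ)
    (hΦ : ∀ z ∈ (sigmaSet lam)ᶜ,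
      Tendsto (fun N : ℕ => ∏ k ∈ Finset.range N, (z - (mu k : ℂ)) / (z - (lam k : ℂ)))
        atTop (nhds (Φ z)))
    (a : ℕ → ℝ)
    (ha : ∀ n : ℕ,
      Tendsto (fun N : ℕ =>
          (lam n - mu n) *
            ∏ k ∈ (Finset.range N).erase n, (lam n - mu k) / (lam n - lam k))
        atTop (nhds (a n))) :
    (∀ n : ℕ, 0 < a n) ∧
    Summable (fun n : ℕ => a n / lam n) ∧
    (∑' n : ℕ, a n / lam n) ≤ 1 ∧
    (∀ K : Set ℂ, IsCompact K → K ⊆ (sigmaSet lam)ᶜ →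
      TendstoUniformlyOn
        (fun (N : ℕ) (z : ℂ) => ∑ n ∈ Finset.range N, (a n : ℂ) / ((lam n : ℂ) - z))
        (fun z : ℂ => ∑' n : ℕ, (a n : ℂ) / ((lam n : ℂ) - z)) atTop K) ∧
    (∀ z ∈ (sigmaSet lam)ᶜ, Φ z = 1 - ∑' n : ℕ, (a n : ℂ) / ((lam n : ℂ) - z)) := by
  have hI : Interlacing lam mu := ⟨h1, h2⟩
  have hpos := hI.pos_of_tendsto ha
  refine ⟨hpos, hI.summable_div hmu_pos ha,
    (hI.summable_div hmu_pos ha).tsum_le_of_sum_range_le (hI.sum_range_div_le_one hmu_pos ha),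
    fun K hK hKσ => tendstoUniformlyOn_sum_div_sub hlim (hI.summable hmu_pos ha)
      (fun n => (hpos n).le) hK hKσ,
    fun z hz => tendsto_nhds_unique (hΦ z hz) (hI.tendsto_prod_range_div_sub hmu_pos hlim ha hz)⟩
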